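/- arXiv:math/0310359 — 5 statements merged into one kernel-verified Lean document; each statement's English description precedes it below -/
import Mathlib

section
/- Let A be a commutative ℝ-algebra, E an A-module, [·,·] : E × E → E an ℝ-bilinear bracket, ρ a map from E to the ℝ-linear derivations of A, and (·|·) : E × E → A a symmetric A-bilinear nondegenerate form. Assume axioms (J), (i) and (ii) hold. Then the Leibniz rule holds: for all x, y ∈ E and f ∈ A, [x, f • y] = f • [x, y] + (ρ(x) f) • y. -/
/-- **Leibniz rule in a Courant algebroid (algebraic formulation).**
`A` is a commutative `ℝ`-algebra (the "functions"), `E` an `A`-module (the "sections"),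
`br` an `ℝ`-bilinear bracket, `ρ` an anchor with values in the `ℝ`-linear derivations
of `A`, and `B` a symmetric `A`-bilinear nondegenerate form.  Axioms (J), (i), (ii)
imply the Leibniz rule `[x, f • y] = f • [x, y] + (ρ x f) • y`. -/
theorem courant_algebroid_leibniz
    {A : Type*} [CommRing A] [Algebra ℝ A]
    {E : Type*} [AddCommGroup E] [Module ℝ E] [Module A E] [IsScalarTower ℝ A E]
    (br : E →ₗ[ℝ] E →ₗ[ℝ] E)
    (ρ : E → Derivation ℝ A A)
    (B : E →ₗ[A] E →ₗ[A] A)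
    (hsymm : ∀ x y : E, B x y = B y x)
    (hnondeg : ∀ x : E, (∀ u : E, B x u = 0) → x = 0)
    (hJ : ∀ x y z : E, br x (br y z) = br (br x y) z + br y (br x z))
    (hi : ∀ x u v : E, ρ x (B u v) = B x (br u v + br v u))
    (hii : ∀ x u v : E, ρ x (B u v) = B (br x u) v + B u (br x v)) :
    ∀ (x y : E) (f : A), br x (f • y) = f • br x y + (ρ x f) • y := by
  intro x y f
  have key : ∀ u : E, B (br x (f • y) - (f • br x y + (ρ x f) • y)) u = 0 := by
    intro u
    have h1 := hii x (f • y) u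
    have h2 := hii x y u
    rw [map_smul, LinearMap.smul_apply, smul_eq_mul, Derivation.leibniz, h2] at h1
    simp only [map_sub, map_add, map_smul, LinearMap.sub_apply, LinearMap.add_apply,
      LinearMap.smul_apply, smul_eq_mul] at h1 ⊢
    linear_combination -h1
  have := hnondeg _ key
  rw [sub_eq_zero] at this
  exact this
end

section
/- Let A be a commutative ℝ-algebra, E an A-module, [·,·] : E × E → E an ℝ-bilinear bracket, ρ a map from E to the ℝ-linear derivations of A, and (·|·) : E × E → A a symmetric A-bilinear nondegenerate form. Assume axioms (J), (i) and (ii) hold, and assume in addition that E is a faithful A-module (if f • z = 0 for all z ∈ E then f = 0). Then the anchor ρ is a morphism for the brackets: for all x, y ∈ E and f ∈ A, ρ([x,y])(f) = ρ(x)(ρ(y)(f)) − ρ(y)(ρ(x)(f)). -/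
/-- **The anchor of a Courant algebroid is a morphism for the brackets
(algebraic formulation).**
`A` is a commutative `ℝ`-algebra, `E` an `A`-module, `br` an `ℝ`-bilinear bracket,
`ρ` an anchor with values in the `ℝ`-linear derivations of `A`, and `B` a symmetric
`A`-bilinear nondegenerate form.  If axioms (J), (i), (ii) hold and in addition `E`
is a faithful `A`-module, then `ρ [x,y] = ρ x ∘ ρ y − ρ y ∘ ρ x` on elements of `A`. -/
theorem courant_algebroid_anchor_morphism
    {A : Type*} [CommRing A] [Algebra ℝ A]
    {E : Type*} [AddCommGroup E] [Module ℝ E] [Module A E] [IsScalarTower ℝ A E]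
    (br : E →ₗ[ℝ] E →ₗ[ℝ] E)
    (ρ : E → Derivation ℝ A A)
    (B : E →ₗ[A] E →ₗ[A] A)
    (hsymm : ∀ x y : E, B x y = B y x)
    (hnondeg : ∀ x : E, (∀ u : E, B x u = 0) → x = 0)
    (hfaith : ∀ f : A, (∀ z : E, f • z = 0) → f = 0)
    (hJ : ∀ x y z : E, br x (br y z) = br (br x y) z + br y (br x z))
    (hi : ∀ x u v : E, ρ x (B u v) = B x (br u v + br v u))
    (hii : ∀ x u v : E, ρ x (B u v) = B (br x u) v + B u (br x v)) :
    ∀ (x y : E) (f : A), ρ (br x y) f = ρ x (ρ y f) - ρ y (ρ x f) := by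
  -- Key identity on elements of the form `B u v`.
  have K : ∀ x y u v : E, ρ (br x y) (B u v)
      = ρ x (ρ y (B u v)) - ρ y (ρ x (B u v)) := by
    intro x y u v
    rw [hii y u v, map_add, hii x (br y u) v, hii x u (br y v),
        hii x u v, map_add, hii y (br x u) v, hii y u (br x v),
        hii (br x y) u v, hJ x y u, hJ x y v]
    simp only [map_add, LinearMap.add_apply]
    ring
  intro x y f
  set c : A := ρ (br x y) f - (ρ x (ρ y f) - ρ y (ρ x f)) with hc
  have hcz : ∀ u v : E, c * B u v = 0 := by
    intro u v
    have h1 := K x y (f • u) v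
    have hB : (B (f • u)) v = f * B u v := by
      rw [map_smul]; simp [smul_eq_mul]
    rw [hB] at h1
    simp only [Derivation.leibniz, smul_eq_mul, map_add, map_mul] at h1
    have h2 := K x y u v
    rw [hc]
    ring_nf
    linear_combination h1 - f * h2
  have hc0 : c = 0 := by
    apply hfaith
    intro z
    apply hnondeg
    intro u
    rw [map_smul, LinearMap.smul_apply, smul_eq_mul, hcz z u]
  exact sub_eq_zero.mp (hc ▸ hc0)
end

section
/- Let A be a commutative ℝ-algebra, E an A-module, [·,·] : E × E → E an ℝ-bilinear bracket, ρ a map from E to the ℝ-linear derivations of A, and (·|·) : E × E → A a symmetric A-bilinear form. Then the conjunction of axioms (i) and (ii) (each holding for all elements of E) is equivalent to the conjunction of axiom (ii) and condition (i″): (x | [y,y]) = ([x,y] | y) for all x, y ∈ E. -/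
/-- **(i) ∧ (ii) is equivalent to (ii) ∧ (i″) for Courant algebroid axioms.**
`A` is a commutative `ℝ`-algebra, `E` an `A`-module, `br` an `ℝ`-bilinear bracket,
`ρ` an anchor with values in the `ℝ`-linear derivations of `A`, and `B` a symmetric
`A`-bilinear form.  Then the conjunction of
(i) `ρ x (u|v) = (x | [u,v] + [v,u])` and (ii) `ρ x (u|v) = ([x,u]|v) + (u|[x,v])`
is equivalent to the conjunction of (ii) and (i″) `(x | [y,y]) = ([x,y] | y)`. -/
theorem courant_axioms_i_ii_iff_ii_i''
    {A : Type*} [CommRing A] [Algebra ℝ A]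
    {E : Type*} [AddCommGroup E] [Module ℝ E] [Module A E] [IsScalarTower ℝ A E]
    (br : E →ₗ[ℝ] E →ₗ[ℝ] E)
    (ρ : E → Derivation ℝ A A)
    (B : E →ₗ[A] E →ₗ[A] A)
    (hsymm : ∀ x y : E, B x y = B y x) :
    ((∀ x u v : E, ρ x (B u v) = B x (br u v + br v u)) ∧
        (∀ x u v : E, ρ x (B u v) = B (br x u) v + B u (br x v))) ↔
      ((∀ x u v : E, ρ x (B u v) = B (br x u) v + B u (br x v)) ∧
        (∀ x y : E, B x (br y y) = B (br x y) y)) := by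
  constructor
  · rintro ⟨hi, hii⟩
    refine ⟨hii, fun x y => ?_⟩
    have h1 : ρ x (B y y) = B x (br y y) + B x (br y y) := by
      rw [hi x y y, map_add]
    have h2 : ρ x (B y y) = B (br x y) y + B (br x y) y := by
      rw [hii x y y, hsymm y (br x y)]
    have h3 : (2 : ℝ) • B x (br y y) = (2 : ℝ) • B (br x y) y := by
      rw [two_smul, two_smul, ← h1, ← h2]
    exact smul_right_injective A (two_ne_zero) h3
  · rintro ⟨hii, hi''⟩
    refine ⟨fun x u v => ?_, hii⟩
    have hpol : B x (br (u + v) (u + v)) = B (br x (u + v)) (u + v) := hi'' x (u + v)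
    simp only [map_add, LinearMap.add_apply] at hpol
    have hu := hi'' x u
    have hv := hi'' x v
    have key : B x (br u v) + B x (br v u) = B (br x u) v + B (br x v) u := by
      have := hpol
      linear_combination this - hu - hv
    calc ρ x (B u v) = B (br x u) v + B u (br x v) := hii x u v
      _ = B (br x u) v + B (br x v) u := by rw [hsymm u (br x v)]
      _ = B x (br u v) + B x (br v u) := key.symm
      _ = B x (br u v + br v u) := by rw [map_add]
end

section
/- Let ψ be an alternating trilinear form on g. On D := g ⊕ g* define the bracket [(x,ξ),(y,η)] := ([x,y], ψ(x,y,·) + ad*_x η − ad*_y ξ), where ψ(x,y,·) ∈ g* denotes z ↦ ψ(x,y,z), and the symmetric bilinear form ((x,ξ)|(y,η)) := ξ(y) + η(x). Then: (1) the bracket is skew-symmetric and the bilinear form is invariant, i.e. ([u,v]|w) + (v|[u,w]) = 0 for all u, v, w ∈ D; (2) the bracket satisfies the Jacobi identity if and only if dψ = 0. In particular, when dψ = 0, D with this bracket and this nondegenerate invariant form is a quadratic Lie algebra (the double of the quasi-Lie bialgebra with underlying Lie bracket of g, zero cobracket and background ψ; its bracket is the Courant bracket with background ψ over a point). -/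
/-! The double of the quasi-Lie bialgebra with zero cobracket and background a
closed 3-form `ψ`: on `D = g ⊕ g*` the bracket
`[(x,ξ),(y,η)] = (⁅x,y⁆, ψ(x,y,·) + ad*_x η − ad*_y ξ)` is skew-symmetric, the
canonical symmetric form `((x,ξ)|(y,η)) = ξ(y) + η(x)` is invariant, and the
bracket satisfies the Jacobi identity iff `dψ = 0`. -/

section CourantDoubleBackground

variable {K : Type*} [Field K] [CharZero K] {g : Type*} [LieRing g] [LieAlgebra K g]

/-- Coadjoint action: `(coad x ξ) y = −ξ ⁅x, y⁆`. -/
def coad (x : g) (ξ : Module.Dual K g) : Module.Dual K g :=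
  - (ξ ∘ₗ (LieAlgebra.ad K g x : g →ₗ[K] g))

/-- `ψ(x, y, ·) ∈ g*`, the linear form `z ↦ ψ (x, y, z)`. -/
noncomputable def psiHat (ψ : g [⋀^Fin 3]→ₗ[K] K) (x y : g) : Module.Dual K g :=
  ψ.toMultilinearMap.toLinearMap ![x, y, 0] 2

/-- Chevalley–Eilenberg differential of an alternating trilinear form:
`dψ(x₀,x₁,x₂,x₃) = Σ_{0 ≤ i < j ≤ 3} (−1)^{i+j} ψ(⁅x_i,x_j⁆, …)` (omitted
arguments in increasing order). -/
def ceDiff3 (ψ : g [⋀^Fin 3]→ₗ[K] K) (x0 x1 x2 x3 : g) : K :=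
  - ψ ![⁅x0, x1⁆, x2, x3] + ψ ![⁅x0, x2⁆, x1, x3] - ψ ![⁅x0, x3⁆, x1, x2]
    - ψ ![⁅x1, x2⁆, x0, x3] + ψ ![⁅x1, x3⁆, x0, x2] - ψ ![⁅x2, x3⁆, x0, x1]

/-- The bracket with background `ψ` on the double `g ⊕ g*`:
`[(x,ξ),(y,η)] = (⁅x,y⁆, ψ(x,y,·) + ad*_x η − ad*_y ξ)`. -/
noncomputable def dblBracket (ψ : g [⋀^Fin 3]→ₗ[K] K)
    (u v : g × Module.Dual K g) : g × Module.Dual K g :=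
  (⁅u.1, v.1⁆, psiHat ψ u.1 v.1 + coad u.1 v.2 - coad v.1 u.2)

/-- The canonical symmetric bilinear form on the double:
`((x,ξ)|(y,η)) = ξ(y) + η(x)`. -/
def dblForm (u v : g × Module.Dual K g) : K := u.2 v.1 + v.2 u.1

set_option linter.unusedSectionVars false

lemma psiHat_apply (ψ : g [⋀^Fin 3]→ₗ[K] K) (x y z : g) : psiHat ψ x y z = ψ ![x, y, z] := by
  simp [psiHat, MultilinearMap.toLinearMap]
  congr 1
  ext i; fin_cases i <;> simp

lemma swap01 (ψ : g [⋀^Fin 3]→ₗ[K] K) (x y z : g) : ψ ![y, x, z] = - ψ ![x, y, z] := by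
  have := ψ.map_swap ![x,y,z] (show (0:Fin 3) ≠ 1 by decide)
  convert this using 2
  ext i; fin_cases i <;> simp [Equiv.swap_apply_def]

lemma swap12 (ψ : g [⋀^Fin 3]→ₗ[K] K) (x y z : g) : ψ ![x, z, y] = - ψ ![x, y, z] := by
  have := ψ.map_swap ![x,y,z] (show (1:Fin 3) ≠ 2 by decide)
  convert this using 2
  ext i; fin_cases i <;> simp [Equiv.swap_apply_def]

lemma rot (ψ : g [⋀^Fin 3]→ₗ[K] K) (x y z : g) : ψ ![z, x, y] = ψ ![x, y, z] := by
  rw [swap01, swap12, swap01]; ring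

lemma neg0 (ψ : g [⋀^Fin 3]→ₗ[K] K) (x y z : g) : ψ ![-x, y, z] = - ψ ![x, y, z] := by
  have h1 : Function.update ![x, y, z] 0 (-x) = ![-x, y, z] := by
    ext i; fin_cases i <;> simp
  have h2 : Function.update ![x, y, z] 0 x = ![x, y, z] := by
    ext i; fin_cases i <;> simp
  have := ψ.toMultilinearMap.map_update_neg ![x,y,z] 0 x
  rw [h1, h2] at this
  simpa using this

lemma lieflip0 (ψ : g [⋀^Fin 3]→ₗ[K] K) (a b c d : g) :
    ψ ![⁅b, a⁆, c, d] = - ψ ![⁅a, b⁆, c, d] := by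
  rw [show ⁅b, a⁆ = -⁅a, b⁆ from (lie_skew b a).symm, neg0]

lemma dual_lie_lie (ξ : Module.Dual K g) (x y t : g) :
    ξ ⁅⁅x,y⁆,t⁆ = ξ ⁅x,⁅y,t⁆⁆ - ξ ⁅y,⁅x,t⁆⁆ := by
  rw [lie_lie, map_sub]

lemma dual_lie_skew (ξ : Module.Dual K g) (x y : g) : ξ ⁅y,x⁆ = - ξ ⁅x,y⁆ := by
  rw [show ⁅y, x⁆ = -⁅x, y⁆ from (lie_skew y x).symm, map_neg]

lemma psiHat_skew (ψ : g [⋀^Fin 3]→ₗ[K] K) (x y : g) : psiHat ψ y x = - psiHat ψ x y := by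
  ext t; simp [psiHat_apply, swap01 ψ x y t]

lemma lie_jacobi3 (x y z : g) : ⁅⁅x,y⁆,z⁆ + ⁅⁅y,z⁆,x⁆ + ⁅⁅z,x⁆,y⁆ = (0 : g) := by
  rw [lie_lie x y z,
    show ⁅⁅y,z⁆,x⁆ = -⁅x,⁅y,z⁆⁆ from (lie_skew _ _).symm,
    show ⁅⁅z,x⁆,y⁆ = -⁅y,⁅z,x⁆⁆ from (lie_skew _ _).symm,
    show ⁅z,x⁆ = -⁅x,z⁆ from (lie_skew _ _).symm, lie_neg]
  abel

lemma jac_snd (ψ : g [⋀^Fin 3]→ₗ[K] K) (u v w : g × Module.Dual K g) (t : g) :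
    (dblBracket ψ (dblBracket ψ u v) w + dblBracket ψ (dblBracket ψ v w) u
      + dblBracket ψ (dblBracket ψ w u) v).2 t = - ceDiff3 ψ u.1 v.1 w.1 t := by
  obtain ⟨x, ξ⟩ := u; obtain ⟨y, η⟩ := v; obtain ⟨z, ζ⟩ := w
  simp only [dblBracket, coad, ceDiff3, Prod.snd, Prod.fst, Prod.mk_add_mk,
    LinearMap.add_apply, LinearMap.sub_apply, LinearMap.neg_apply, LinearMap.comp_apply,
    LinearMap.coe_comp, Function.comp_apply, LieAlgebra.ad_apply, map_add, map_sub, map_neg,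
    psiHat_apply]
  linear_combination (-1 : K) * (dual_lie_lie ζ x y t) - (dual_lie_lie ξ y z t)
    - (dual_lie_lie η z x t)
    - (rot ψ x y ⁅z,t⁆) - (rot ψ y z ⁅x,t⁆) - (rot ψ z x ⁅y,t⁆)
    + (swap12 ψ ⁅y,t⁆ x z) + (lieflip0 ψ x z y t)

/-- The bracket with background `ψ` on `g ⊕ g*` is skew-symmetric, the canonical
form is invariant, and the Jacobi identity holds iff `dψ = 0`; when `dψ = 0` this
makes `g ⊕ g*` a quadratic Lie algebra (the Courant bracket with background `ψ`
over a point). -/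
theorem dblBracket_skew_invariant_and_jacobi_iff_closed
    (ψ : g [⋀^Fin 3]→ₗ[K] K) :
    (∀ u v : g × Module.Dual K g, dblBracket ψ u v = - dblBracket ψ v u) ∧
    (∀ u v w : g × Module.Dual K g,
      dblForm (dblBracket ψ u v) w + dblForm v (dblBracket ψ u w) = 0) ∧
    ((∀ u v w : g × Module.Dual K g,
        dblBracket ψ (dblBracket ψ u v) w + dblBracket ψ (dblBracket ψ v w) u
          + dblBracket ψ (dblBracket ψ w u) v = 0) ↔
      (∀ x0 x1 x2 x3 : g, ceDiff3 ψ x0 x1 x2 x3 = 0)) := by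
  refine ⟨?_, ?_, ?_, ?_⟩
  · rintro ⟨x, ξ⟩ ⟨y, η⟩
    refine Prod.ext ?_ ?_
    · simp only [dblBracket, Prod.fst_neg]
      exact (lie_skew x y).symm
    · simp only [dblBracket, Prod.snd_neg, psiHat_skew ψ y x]
      abel
  · rintro ⟨x, ξ⟩ ⟨y, η⟩ ⟨z, ζ⟩
    simp only [dblForm, dblBracket, coad, Prod.snd, Prod.fst, LinearMap.add_apply,
      LinearMap.sub_apply, LinearMap.neg_apply, LinearMap.comp_apply,
      LinearMap.coe_comp, Function.comp_apply, LieAlgebra.ad_apply, psiHat_apply]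
    linear_combination (swap12 ψ x y z) + (dual_lie_skew ξ y z)
  · intro h x0 x1 x2 x3
    have h2 := jac_snd ψ (x0, 0) (x1, 0) (x2, 0) x3
    rw [h (x0, 0) (x1, 0) (x2, 0)] at h2
    simpa using h2.symm
  · intro h u v w
    refine Prod.ext ?_ (LinearMap.ext fun t => ?_)
    · exact lie_jacobi3 u.1 v.1 w.1
    · rw [jac_snd, h]
      simp

end CourantDoubleBackground
end

section
/- Let P : g* × g* → g be a bilinear map such that the trilinear form (ξ,η,ζ) ↦ ζ(P(ξ,η)) on g* is alternating. On g ⊕ g* define the bracket [(x,ξ),(y,η)] := ([x,y] + P(ξ,η), ad*_x η − ad*_y ξ). Then this bracket is skew-symmetric, the canonical symmetric bilinear form ((x,ξ)|(y,η)) := ξ(y) + η(x) is invariant under it, and the bracket satisfies the Jacobi identity if and only if P is ad-invariant, i.e. [x, P(ξ,η)] = P(ad*_x ξ, η) + P(ξ, ad*_x η) for all x ∈ g and ξ, η ∈ g*. (This is the Courant bracket with a trivector background φ over a point: the double of the Lie quasi-bialgebra with zero cobracket, where P corresponds to the element φ ∈ Λ³g and ad-invariance of P is the condition {μ,φ} =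 0.) -/
set_option linter.unusedSectionVars false

/-! The Courant bracket with a trivector background `φ` over a point: on `g ⊕ g*`
the bracket `[(x,ξ),(y,η)] = (⁅x,y⁆ + P(ξ,η), ad*_x η − ad*_y ξ)`, where `P` is a
bilinear map `g* × g* → g` whose associated trilinear form `(ξ,η,ζ) ↦ ζ(P(ξ,η))`
is alternating, is skew-symmetric, leaves the canonical symmetric form invariant,
and satisfies the Jacobi identity iff `P` is ad-invariant. -/

section TrivectorBackground

variable {K : Type*} [Field K] [CharZero K] {g : Type*} [LieRing g] [LieAlgebra K g]

/-- The bracket on the double `g ⊕ g*` with trivector background `P`: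
`[(x,ξ),(y,η)] = (⁅x,y⁆ + P ξ η, ad*_x η − ad*_y ξ)`. -/
def dblBracketP (P : Module.Dual K g →ₗ[K] Module.Dual K g →ₗ[K] g)
    (u v : g × Module.Dual K g) : g × Module.Dual K g :=
  (⁅u.1, v.1⁆ + P u.2 v.2, coad u.1 v.2 - coad v.1 u.2)

lemma coad_apply (x y : g) (ξ : Module.Dual K g) : coad x ξ y = - ξ ⁅x, y⁆ := rfl

lemma coad_zero (x : g) : coad x (0 : Module.Dual K g) = 0 := by
  ext a; simp [coad_apply]

lemma zero_coad (ξ : Module.Dual K g) : coad (0 : g) ξ = 0 := by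
  ext a; simp [coad_apply]

lemma coad_sub (x : g) (ξ η : Module.Dual K g) :
    coad x (ξ - η) = coad x ξ - coad x η := by
  ext a; simp [coad_apply, sub_neg_eq_add]; ring

lemma coad_add_left (x y : g) (ξ : Module.Dual K g) :
    coad (x + y) ξ = coad x ξ + coad y ξ := by
  ext a; simp [coad_apply, add_lie]; ring

lemma coad_lie (x y : g) (ζ : Module.Dual K g) :
    coad ⁅x, y⁆ ζ = coad x (coad y ζ) - coad y (coad x ζ) := by
  ext a; simp [coad_apply, lie_lie]

/-- The bracket `[(x,ξ),(y,η)] = (⁅x,y⁆ + P(ξ,η), ad*_x η − ad*_y ξ)` is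
skew-symmetric, the canonical form is invariant under it, and it satisfies the
Jacobi identity iff `P` is ad-invariant:
`⁅x, P ξ η⁆ = P (ad*_x ξ) η + P ξ (ad*_x η)`. -/
theorem dblBracketP_skew_invariant_and_jacobi_iff_adInvariant
    (P : Module.Dual K g →ₗ[K] Module.Dual K g →ₗ[K] g)
    (hP1 : ∀ ξ η : Module.Dual K g, P ξ η = - P η ξ)
    (hP2 : ∀ ξ η ζ : Module.Dual K g, ζ (P ξ η) = - η (P ξ ζ)) :
    (∀ u v : g × Module.Dual K g, dblBracketP P u v = - dblBracketP P v u) ∧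
    (∀ u v w : g × Module.Dual K g,
      dblForm (dblBracketP P u v) w + dblForm v (dblBracketP P u w) = 0) ∧
    ((∀ u v w : g × Module.Dual K g,
        dblBracketP P (dblBracketP P u v) w + dblBracketP P (dblBracketP P v w) u
          + dblBracketP P (dblBracketP P w u) v = 0) ↔
      (∀ (x : g) (ξ η : Module.Dual K g),
        ⁅x, P ξ η⁆ = P (coad x ξ) η + P ξ (coad x η))) := by
  refine ⟨?_, ?_, ?_, ?_⟩
  · -- skew-symmetry
    rintro ⟨x, ξ⟩ ⟨y, η⟩
    simp only [dblBracketP, Prod.neg_mk, Prod.mk.injEq]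
    constructor
    · rw [hP1 ξ η, ← lie_skew y x]; abel
    · rw [neg_sub]
  · -- invariance of the canonical form
    rintro ⟨x, ξ⟩ ⟨y, η⟩ ⟨z, ζ⟩
    simp only [dblBracketP, dblForm, LinearMap.sub_apply, coad_apply, map_add]
    have s1 : ξ ⁅z, y⁆ = - ξ ⁅y, z⁆ := by rw [← lie_skew y z, map_neg, neg_neg]
    linear_combination hP2 ξ η ζ + s1
  · -- Jacobi ⇒ ad-invariance
    intro h x ξ η
    have h1 := congrArg Prod.fst (h (x, 0) ((0 : g), ξ) ((0 : g), η))
    simp only [dblBracketP, Prod.fst_add, Prod.fst_zero, map_zero, LinearMap.zero_apply,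
      LinearMap.map_zero, lie_zero, zero_lie, coad_zero, zero_coad, add_zero, zero_add,
      sub_zero, zero_sub, map_neg, LinearMap.neg_apply] at h1
    have s : ⁅P ξ η, x⁆ = -⁅x, P ξ η⁆ := by rw [← lie_skew x (P ξ η), neg_neg]
    linear_combination (norm := module) -h1 + s - hP1 ξ (coad x η)
  · -- ad-invariance ⇒ Jacobi
    intro hI
    rintro ⟨x, ξ⟩ ⟨y, η⟩ ⟨z, ζ⟩
    have S0 : coad (P ξ η) ζ + coad (P η ζ) ξ + coad (P ζ ξ) η = 0 := by
      ext a
      simp only [LinearMap.add_apply, LinearMap.zero_apply, coad_apply]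
      have t1 : ζ ⁅P ξ η, a⁆ = -(ζ (P (coad a ξ) η) + ζ (P ξ (coad a η))) := by
        rw [← lie_skew (P ξ η) a, map_neg, hI a ξ η, map_add]
      have t2 : ξ ⁅P η ζ, a⁆ = -(ξ (P (coad a η) ζ) + ξ (P η (coad a ζ))) := by
        rw [← lie_skew (P η ζ) a, map_neg, hI a η ζ, map_add]
      have t3 : η ⁅P ζ ξ, a⁆ = -(η (P (coad a ζ) ξ) + η (P ζ (coad a ξ))) := by
        rw [← lie_skew (P ζ ξ) a, map_neg, hI a ζ ξ, map_add]
      have d1 : ζ (P ξ (coad a η)) = ξ (P (coad a η) ζ) := by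
        rw [hP1 ξ (coad a η), map_neg, hP2 (coad a η) ξ ζ, neg_neg]
      have d2 : ξ (P η (coad a ζ)) = η (P (coad a ζ) ξ) := by
        rw [hP1 η (coad a ζ), map_neg, hP2 (coad a ζ) η ξ, neg_neg]
      have d3 : η (P ζ (coad a ξ)) = ζ (P (coad a ξ) η) := by
        rw [hP1 ζ (coad a ξ), map_neg, hP2 (coad a ξ) ζ η, neg_neg]
      have e5 : η (P (coad a ζ) ξ) = -(ζ (P (coad a ξ) η) + ζ (P ξ (coad a η))) := by
        rw [hP1 (coad a ζ) ξ, map_neg, ← hP2 ξ η (coad a ζ)]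
        show -ζ ⁅a, P ξ η⁆ = _
        rw [hI a ξ η, map_add]
      linear_combination -t1 - t2 - t3 - d1 + d2 + d3 + 2*e5
    have j : ⁅⁅x, y⁆, z⁆ + ⁅⁅y, z⁆, x⁆ + ⁅⁅z, x⁆, y⁆ = 0 := by
      rw [← lie_skew ⁅x, y⁆ z, ← lie_skew ⁅y, z⁆ x, ← lie_skew ⁅z, x⁆ y]
      linear_combination (norm := module) - lie_jacobi x y z
    have b1 : ⁅P ξ η, z⁆ = -P (coad z ξ) η - P ξ (coad z η) := by
      rw [← lie_skew (P ξ η) z, hI z ξ η]; abel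
    have b2 : ⁅P η ζ, x⁆ = -P (coad x η) ζ - P η (coad x ζ) := by
      rw [← lie_skew (P η ζ) x, hI x η ζ]; abel
    have b3 : ⁅P ζ ξ, y⁆ = -P (coad y ζ) ξ - P ζ (coad y ξ) := by
      rw [← lie_skew (P ζ ξ) y, hI y ζ ξ]; abel
    have jd1 := coad_lie x y ζ
    have jd2 := coad_lie y z ξ
    have jd3 := coad_lie z x η
    simp only [dblBracketP, Prod.mk_add_mk, Prod.mk_eq_zero]
    constructor
    · simp only [add_lie, map_sub, LinearMap.sub_apply]
      linear_combination (norm := module) j + b1 + b2 + b3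
        - hP1 ξ (coad z η) - hP1 η (coad x ζ) - hP1 ζ (coad y ξ)
    · simp only [coad_add_left, coad_sub]
      linear_combination (norm := module) jd1 + jd2 + jd3 + S0

end TrivectorBackground
end
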